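/- arXiv:1805.10842 — 3 statements merged into one kernel-verified Lean document; each statement's English description precedes it below -/
import Mathlib

section
/- In the setting of the rank-one Kronecker approximation with m = 2: let C = A₁ ⊗ B₁ + A₂ ⊗ B₂, c₁, c₂ independent uniform signs, p₁, p₂ > 0, A' = c₁p₁A₁ + c₂p₂A₂, B' = c₁(1/p₁)B₁ + c₂(1/p₂)B₂. With the choice p_i = √(‖B_i‖/‖A_i‖) (assuming A_i, B_i nonzero), the variance of A' ⊗ B' equals 2(‖A₁‖‖A₂‖‖B₁‖‖B₂‖ + ⟨A₁,A₂⟩⟨B₁,B₂⟩). -/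
open scoped Kronecker

/-- Frobenius norm squared. -/
noncomputable def frobSq {α β : Type*} [Fintype α] [Fintype β] (M : Matrix α β ℝ) : ℝ := ∑ i, ∑ j, (M i j) ^ 2

/-- Frobenius norm. -/
noncomputable def fnorm {α β : Type*} [Fintype α] [Fintype β] (M : Matrix α β ℝ) : ℝ := Real.sqrt (frobSq M)

/-- Frobenius inner product. -/
def finner {α β : Type*} [Fintype α] [Fintype β] (M N : Matrix α β ℝ) : ℝ := ∑ i, ∑ j, M i j * N i j

/-- Rademacher sign associated to a boolean. -/
def sgn (b : Bool) : ℝ := if b then 1 else -1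

/-!
Multiplying out, `A' ⊗ B' = C + c₁c₂ E` with `E = (p₁/p₂) A₁ ⊗ B₂ + (p₂/p₁) A₂ ⊗ B₁`, because
`c_i² = 1`. As `c₁c₂` is again a uniform sign, the mean is `C` and the variance is `‖E‖²`.
Since the Frobenius inner product is multiplicative on Kronecker products,
`‖E‖² = (p₁/p₂)² ‖A₁‖²‖B₂‖² + (p₂/p₁)² ‖A₂‖²‖B₁‖² + 2⟨A₁,A₂⟩⟨B₁,B₂⟩`, and the choice
`p_i² = ‖B_i‖/‖A_i‖` makes both squared terms equal to `‖A₁‖‖A₂‖‖B₁‖‖B₂‖`.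
-/

open Matrix

section Frobenius

variable {α β γ δ : Type*} [Fintype α] [Fintype β] [Fintype γ] [Fintype δ]

lemma finner_self (M : Matrix α β ℝ) : finner M M = frobSq M := by
  simp [finner, frobSq, sq]

lemma finner_comm (M N : Matrix α β ℝ) : finner M N = finner N M := by
  simp [finner, mul_comm]

lemma finner_add_left (M N P : Matrix α β ℝ) : finner (M + N) P = finner M P + finner N P := by
  simp [finner, add_mul, Finset.sum_add_distrib]

lemma finner_add_right (M N P : Matrix α β ℝ) : finner M (N + P) = finner M N + finner M P := by
  rw [finner_comm, finner_add_left, finner_comm N, finner_comm P]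

lemma finner_smul_left (r : ℝ) (M N : Matrix α β ℝ) : finner (r • M) N = r * finner M N := by
  simp [finner, Finset.mul_sum, mul_assoc]

lemma finner_smul_right (r : ℝ) (M N : Matrix α β ℝ) : finner M (r • N) = r * finner M N := by
  rw [finner_comm, finner_smul_left, finner_comm]

lemma finner_eq_trace (M N : Matrix α β ℝ) : finner M N = (Mᵀ * N).trace := by
  simp only [trace, diag, mul_apply, transpose_apply, finner]
  exact Finset.sum_comm

lemma finner_kronecker (A C : Matrix α β ℝ) (B D : Matrix γ δ ℝ) :
    finner (A ⊗ₖ B) (C ⊗ₖ D) = finner A C * finner B D := by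
  rw [finner_eq_trace, finner_eq_trace, finner_eq_trace, ← kroneckerMap_transpose,
    ← mul_kronecker_mul, trace_kronecker]

lemma frobSq_add (M N : Matrix α β ℝ) :
    frobSq (M + N) = frobSq M + 2 * finner M N + frobSq N := by
  simp only [← finner_self, finner_add_left, finner_add_right, finner_comm N M]
  ring

lemma frobSq_smul (r : ℝ) (M : Matrix α β ℝ) : frobSq (r • M) = r ^ 2 * frobSq M := by
  simp only [← finner_self, finner_smul_left, finner_smul_right]
  ring

lemma frobSq_kronecker (A : Matrix α β ℝ) (B : Matrix γ δ ℝ) :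
    frobSq (A ⊗ₖ B) = frobSq A * frobSq B := by
  simp only [← finner_self, finner_kronecker]

lemma frobSq_pos {M : Matrix α β ℝ} (h : M ≠ 0) : 0 < frobSq M := by
  obtain ⟨i, j, hij⟩ : ∃ i j, M i j ≠ 0 := by
    by_contra! hc
    exact h (ext hc)
  calc 0 < M i j ^ 2 := by positivity
    _ ≤ ∑ j', M i j' ^ 2 :=
        Finset.single_le_sum (fun _ _ => sq_nonneg _) (Finset.mem_univ j)
    _ ≤ frobSq M :=
        Finset.single_le_sum (f := fun i' => ∑ j', M i' j' ^ 2)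
          (fun _ _ => Finset.sum_nonneg fun _ _ => sq_nonneg _) (Finset.mem_univ i)

lemma fnorm_pos {M : Matrix α β ℝ} (h : M ≠ 0) : 0 < fnorm M :=
  Real.sqrt_pos.mpr (frobSq_pos h)

lemma sq_fnorm (M : Matrix α β ℝ) : fnorm M ^ 2 = frobSq M :=
  Real.sq_sqrt (Finset.sum_nonneg fun _ _ => Finset.sum_nonneg fun _ _ => sq_nonneg _)

end Frobenius

@[simp] lemma sgn_true : sgn true = 1 := rfl

@[simp] lemma sgn_false : sgn false = -1 := rfl

lemma sgn_sq (s : Bool) : sgn s ^ 2 = 1 := by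
  cases s <;> norm_num

lemma frobSq_variance_sgn_mul_sgn {α β : Type*} [Fintype α] [Fintype β] (X Y : Matrix α β ℝ) :
    (1 / 4 : ℝ) * ∑ s₁ : Bool, ∑ s₂ : Bool, frobSq (X + (sgn s₁ * sgn s₂) • Y)
        - frobSq ((1 / 4 : ℝ) • ∑ s₁ : Bool, ∑ s₂ : Bool, (X + (sgn s₁ * sgn s₂) • Y))
      = frobSq Y := by
  have hmean : (1 / 4 : ℝ) • ∑ s₁ : Bool, ∑ s₂ : Bool, (X + (sgn s₁ * sgn s₂) • Y) = X := by
    simp only [Fintype.sum_bool, sgn_true, sgn_false]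
    module
  rw [hmean]
  simp only [Fintype.sum_bool, frobSq_add, frobSq_smul, finner_smul_right, sgn_true, sgn_false]
  ring

lemma kronecker_sgn_expansion {α β γ δ : Type*} (A₁ A₂ : Matrix α β ℝ) (B₁ B₂ : Matrix γ δ ℝ)
    {p₁ p₂ : ℝ} (hp₁ : p₁ ≠ 0) (hp₂ : p₂ ≠ 0) (s₁ s₂ : Bool) :
    ((sgn s₁ * p₁) • A₁ + (sgn s₂ * p₂) • A₂) ⊗ₖ ((sgn s₁ / p₁) • B₁ + (sgn s₂ / p₂) • B₂)
      = (A₁ ⊗ₖ B₁ + A₂ ⊗ₖ B₂)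
        + (sgn s₁ * sgn s₂) • ((p₁ / p₂) • A₁ ⊗ₖ B₂ + (p₂ / p₁) • A₂ ⊗ₖ B₁) := by
  simp only [add_kronecker, kronecker_add, smul_kronecker, kronecker_smul, smul_add, smul_smul]
  match_scalars <;> field_simp <;> exact sgn_sq _

lemma sq_sqrt_div_mul_sq {a₁ a₂ b₁ b₂ : ℝ} (ha₁ : 0 < a₁) (ha₂ : 0 < a₂) (hb₁ : 0 ≤ b₁)
    (hb₂ : 0 < b₂) :
    (√(b₁ / a₁) / √(b₂ / a₂)) ^ 2 * (a₁ ^ 2 * b₂ ^ 2) = a₁ * a₂ * b₁ * b₂ := by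
  rw [div_pow, Real.sq_sqrt (by positivity), Real.sq_sqrt (by positivity)]
  field_simp

/-- Variance of the rank-one Kronecker approximation with `m = 2` and the optimal choice
`p_i = √(‖B_i‖/‖A_i‖)`: `Var[A' ⊗ B'] = 2(‖A₁‖‖A₂‖‖B₁‖‖B₂‖ + ⟨A₁,A₂⟩⟨B₁,B₂⟩)`.
Expectations over the two independent uniform signs are realized as averages over the
four sign patterns. -/
theorem stmt2 {a b c d : ℕ} (A₁ A₂ : Matrix (Fin a) (Fin b) ℝ)
    (B₁ B₂ : Matrix (Fin c) (Fin d) ℝ)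
    (hA₁ : A₁ ≠ 0) (hA₂ : A₂ ≠ 0) (hB₁ : B₁ ≠ 0) (hB₂ : B₂ ≠ 0) :
    let p₁ := Real.sqrt (fnorm B₁ / fnorm A₁)
    let p₂ := Real.sqrt (fnorm B₂ / fnorm A₂)
    let C' : Bool → Bool → Matrix (Fin a × Fin c) (Fin b × Fin d) ℝ := fun s₁ s₂ =>
      ((sgn s₁ * p₁) • A₁ + (sgn s₂ * p₂) • A₂) ⊗ₖ ((sgn s₁ / p₁) • B₁ + (sgn s₂ / p₂) • B₂)
    ((1 / 4 : ℝ) * ∑ s₁ : Bool, ∑ s₂ : Bool, frobSq (C' s₁ s₂))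
        - frobSq ((1 / 4 : ℝ) • ∑ s₁ : Bool, ∑ s₂ : Bool, C' s₁ s₂)
      = 2 * (fnorm A₁ * fnorm A₂ * fnorm B₁ * fnorm B₂ + finner A₁ A₂ * finner B₁ B₂) := by
  intro p₁ p₂ C'
  have ha₁ := fnorm_pos hA₁
  have ha₂ := fnorm_pos hA₂
  have hb₁ := fnorm_pos hB₁
  have hb₂ := fnorm_pos hB₂
  have hp₁ : p₁ ≠ 0 := (Real.sqrt_pos.mpr (by positivity)).ne'
  have hp₂ : p₂ ≠ 0 := (Real.sqrt_pos.mpr (by positivity)).ne'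
  simp only [C', kronecker_sgn_expansion A₁ A₂ B₁ B₂ hp₁ hp₂]
  rw [frobSq_variance_sgn_mul_sgn]
  simp only [frobSq_add, frobSq_smul, frobSq_kronecker, finner_smul_left, finner_smul_right,
    finner_kronecker]
  simp only [← sq_fnorm]
  have h₁₂ : (p₁ / p₂) ^ 2 * (fnorm A₁ ^ 2 * fnorm B₂ ^ 2)
      = fnorm A₁ * fnorm A₂ * fnorm B₁ * fnorm B₂ := sq_sqrt_div_mul_sq ha₁ ha₂ hb₁.le hb₂
  have h₂₁ : (p₂ / p₁) ^ 2 * (fnorm A₂ ^ 2 * fnorm B₁ ^ 2)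
      = fnorm A₁ * fnorm A₂ * fnorm B₁ * fnorm B₂ := by
    rw [sq_sqrt_div_mul_sq ha₂ ha₁ hb₂.le hb₁]; ring
  have hcross : p₁ / p₂ * (p₂ / p₁) = 1 := by field_simp
  rw [finner_comm B₂ B₁]
  linear_combination h₁₂ + h₂₁ + 2 * finner A₁ A₂ * finner B₁ B₂ * hcross
end

section
/- Let ε ∈ (0,1) and C₁, C₂ > 0. Suppose sequences of nonnegative reals (a_t), (b_t) satisfy a₀ b₀ = 0 and for all t ≥ 1: a_t ≤ √(m_t · a_{t−1}) + √(C₁C₂) and b_t ≤ √(m_t · a_{t−1}) + √(C₁C₂), where m_t ≤ (1−ε) b_{t−1}. Then a_t b_t ≤ 4C₁C₂/ε² for all t ≥ 0. -/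
/-!
With `B = 2√(C₁C₂)/ε`, the invariant `a_t b_t ≤ B²` propagates: `m_{t+1} a_t ≤ (1-ε) B² ≤ ((1-ε/2) B)²`,
so `a_{t+1}` and `b_{t+1}` are both at most `(1-ε/2) B + √(C₁C₂) = B`.
-/

theorem one_sub_le_one_sub_half_sq (ε : ℝ) : 1 - ε ≤ (1 - ε / 2) ^ 2 := by
  nlinarith [sq_nonneg ε]

theorem sqrt_le_one_sub_half_mul {x B ε : ℝ} (hB : 0 ≤ B) (hε : ε ≤ 2)
    (hx : x ≤ (1 - ε) * B ^ 2) : √x ≤ (1 - ε / 2) * B := by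
  refine Real.sqrt_le_iff.mpr ⟨mul_nonneg (by linarith) hB, ?_⟩
  calc x ≤ (1 - ε) * B ^ 2 := hx
    _ ≤ (1 - ε / 2) ^ 2 * B ^ 2 := by gcongr; exact one_sub_le_one_sub_half_sq ε
    _ = ((1 - ε / 2) * B) ^ 2 := (mul_pow _ _ _).symm

theorem mul_le_sq_of_le {a b B : ℝ} (ha : 0 ≤ a) (haB : a ≤ B) (hbB : b ≤ B) : a * b ≤ B ^ 2 :=
  calc a * b ≤ a * B := mul_le_mul_of_nonneg_left hbB ha
    _ ≤ B * B := mul_le_mul_of_nonneg_right haB (ha.trans haB)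
    _ = B ^ 2 := (sq B).symm

theorem mul_le_sq_of_recursive_bound {ε K a b m a' b' : ℝ} (hε0 : 0 < ε) (hε1 : ε ≤ 1)
    (hK : 0 ≤ K) (ha : 0 ≤ a) (ha' : 0 ≤ a') (hab : a * b ≤ (2 * K / ε) ^ 2)
    (hm : m ≤ (1 - ε) * b) (ha'_le : a' ≤ √(m * a) + K) (hb'_le : b' ≤ √(m * a) + K) :
    a' * b' ≤ (2 * K / ε) ^ 2 := by
  have hma : m * a ≤ (1 - ε) * (2 * K / ε) ^ 2 :=
    calc m * a ≤ (1 - ε) * b * a := mul_le_mul_of_nonneg_right hm ha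
      _ = (1 - ε) * (a * b) := by ring
      _ ≤ (1 - ε) * (2 * K / ε) ^ 2 := mul_le_mul_of_nonneg_left hab (by linarith)
  have hsqrt := sqrt_le_one_sub_half_mul (by positivity) (by linarith) hma
  have hfixed : (1 - ε / 2) * (2 * K / ε) + K = 2 * K / ε := by field_simp; ring
  exact mul_le_sq_of_le ha' (by linarith) (by linarith)

theorem stmt10_general (ε C₁ C₂ : ℝ) (hε : ε ∈ Set.Ioo (0 : ℝ) 1) (hC₁ : 0 < C₁) (hC₂ : 0 < C₂)
    (a b m : ℕ → ℝ) (ha : ∀ t, 0 ≤ a t)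
    (h0 : a 0 * b 0 = 0)
    (hma : ∀ t : ℕ, 1 ≤ t → m t ≤ (1 - ε) * b (t - 1))
    (hat : ∀ t : ℕ, 1 ≤ t → a t ≤ Real.sqrt (m t * a (t - 1)) + Real.sqrt (C₁ * C₂))
    (hbt : ∀ t : ℕ, 1 ≤ t → b t ≤ Real.sqrt (m t * a (t - 1)) + Real.sqrt (C₁ * C₂)) :
    ∀ t, a t * b t ≤ 4 * C₁ * C₂ / ε ^ 2 := by
  obtain ⟨hε0, hε1⟩ := hε
  have hbound : 4 * C₁ * C₂ / ε ^ 2 = (2 * √(C₁ * C₂) / ε) ^ 2 := by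
    rw [div_pow, mul_pow, Real.sq_sqrt (by positivity)]; ring
  intro t
  rw [hbound]
  induction t with
  | zero => rw [h0]; positivity
  | succ n ih =>
    exact mul_le_sq_of_recursive_bound hε0 hε1.le (Real.sqrt_nonneg _) (ha n) (ha (n + 1)) ih
      (by simpa using hma (n + 1) (by omega)) (by simpa using hat (n + 1) (by omega))
      (by simpa using hbt (n + 1) (by omega))

/-- Claim 2 of the paper, abstracted: with `a₀b₀ = 0`,
`a_t, b_t ≤ √(m_t a_{t−1}) + √(C₁C₂)` and `m_t ≤ (1−ε) b_{t−1}`, it follows that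
`a_t b_t ≤ 4C₁C₂/ε²` for all `t`. -/
theorem stmt10 (ε C₁ C₂ : ℝ) (hε : ε ∈ Set.Ioo (0 : ℝ) 1) (hC₁ : 0 < C₁) (hC₂ : 0 < C₂)
    (a b m : ℕ → ℝ) (ha : ∀ t, 0 ≤ a t) (hb : ∀ t, 0 ≤ b t) (hm : ∀ t, 0 ≤ m t)
    (h0 : a 0 * b 0 = 0)
    (hma : ∀ t : ℕ, 1 ≤ t → m t ≤ (1 - ε) * b (t - 1))
    (hat : ∀ t : ℕ, 1 ≤ t → a t ≤ Real.sqrt (m t * a (t - 1)) + Real.sqrt (C₁ * C₂))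
    (hbt : ∀ t : ℕ, 1 ≤ t → b t ≤ Real.sqrt (m t * a (t - 1)) + Real.sqrt (C₁ * C₂)) :
    ∀ t, a t * b t ≤ 4 * C₁ * C₂ / ε ^ 2 :=
  stmt10_general ε C₁ C₂ hε hC₁ hC₂ a b m ha h0 hma hat hbt
end

section
/- Under the setup of the KF-RTRL recursion: if E[u_{t−1} ⊗ A_{t−1}] = G_{t−1} and G_t = H_t G_{t−1} + ĥ_t ⊗ D_t, with u_t = c₁p₁u_{t−1} + c₂p₂ĥ_t and A_t = c₁(1/p₁)H_t A_{t−1} + c₂(1/p₂)D_t, where c₁, c₂ are independent uniform signs independent of (u_{t−1}, A_{t−1}) and p₁, p₂ > 0 are deterministic, then E[u_t ⊗ A_t] = G_t. -/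
open MeasureTheory

/-- Kronecker product of a row vector `u ∈ ℝ^{1×p}` with a matrix `A ∈ ℝ^{n×r}`,
identified with an `n×(pr)` matrix (the first dimension of `u` is `1`). -/
def rowKron {p n r : ℕ} (u : Fin p → ℝ) (A : Matrix (Fin n) (Fin r) ℝ) :
    Matrix (Fin n) (Fin p × Fin r) ℝ :=
  Matrix.of fun i ab => u ab.1 * A i ab.2

theorem rowKron_mul_left {p n r : ℕ} (u : Fin p → ℝ) (H : Matrix (Fin n) (Fin n) ℝ)
    (A : Matrix (Fin n) (Fin r) ℝ) : rowKron u (H * A) = H * rowKron u A := by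
  ext i ab
  simp only [rowKron, Matrix.of_apply, Matrix.mul_apply, Finset.mul_sum]
  exact Finset.sum_congr rfl fun j _ => by ring

/-- Averaging over the four sign patterns kills the cross terms `c₁ c₂ (…)`, while
`c₁² = c₂² = 1` and the scalings `p₁`, `1 / p₁` (resp. `p₂`, `1 / p₂`) cancel. -/
theorem sign_average_rowKron {p n r : ℕ} (u h : Fin p → ℝ) (X Y : Matrix (Fin n) (Fin r) ℝ)
    {p₁ p₂ : ℝ} (hp₁ : p₁ ≠ 0) (hp₂ : p₂ ≠ 0) (i : Fin n) (ab : Fin p × Fin r) :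
    (1 / 4 : ℝ) * ∑ c₁ : Bool, ∑ c₂ : Bool,
        rowKron (fun a => sgn c₁ * p₁ * u a + sgn c₂ * p₂ * h a)
          ((sgn c₁ / p₁) • X + (sgn c₂ / p₂) • Y) i ab
      = (rowKron u X + rowKron h Y) i ab := by
  simp only [Fintype.sum_bool, rowKron, sgn, Matrix.add_apply, Matrix.smul_apply,
    Matrix.of_apply, if_true, Bool.false_eq_true, if_false, smul_eq_mul]
  field_simp
  ring

section MatrixIntegral

variable {Ω : Type*} [MeasurableSpace Ω] {μ : Measure Ω} {l m k : Type*} [Fintype m]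

theorem integrable_matrix_mul_apply (H : Matrix l m ℝ) {M : Ω → Matrix m k ℝ}
    (hM : ∀ j b, Integrable (fun ω => M ω j b) μ) (i : l) (b : k) :
    Integrable (fun ω => (H * M ω) i b) μ := by
  simp only [Matrix.mul_apply]
  exact integrable_finsetSum _ fun j _ => (hM j b).const_mul (H i j)

theorem integral_matrix_mul_apply (H : Matrix l m ℝ) {M : Ω → Matrix m k ℝ}
    (hM : ∀ j b, Integrable (fun ω => M ω j b) μ) (i : l) (b : k) :
    ∫ ω, (H * M ω) i b ∂μ = (H * Matrix.of fun j b => ∫ ω, M ω j b ∂μ) i b := by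
  simp only [Matrix.mul_apply, Matrix.of_apply]
  rw [integral_finsetSum _ fun j _ => (hM j b).const_mul (H i j)]
  exact Finset.sum_congr rfl fun j _ => integral_const_mul _ _

end MatrixIntegral

/-- The expectation over the independent uniform signs `c₁, c₂` is the average over the four
sign patterns, taken inside the integral over `Ω`. -/
theorem stmt16_general {Ω : Type*} [MeasurableSpace Ω] (μ : Measure Ω) [IsProbabilityMeasure μ]
    {p n r : ℕ} (u : Ω → Fin p → ℝ) (A : Ω → Matrix (Fin n) (Fin r) ℝ)
    (Gprev Gt : Matrix (Fin n) (Fin p × Fin r) ℝ)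
    (H : Matrix (Fin n) (Fin n) ℝ) (hh : Fin p → ℝ) (D : Matrix (Fin n) (Fin r) ℝ)
    (p₁ p₂ : ℝ) (hp₁ : 0 < p₁) (hp₂ : 0 < p₂)
    (hint_uA : ∀ (i : Fin n) (ab : Fin p × Fin r), Integrable (fun ω => u ω ab.1 * A ω i ab.2) μ)
    (hprev : ∀ (i : Fin n) (ab : Fin p × Fin r), (∫ ω, rowKron (u ω) (A ω) i ab ∂μ) = Gprev i ab)
    (hGt : Gt = H * Gprev + rowKron hh D) :
    ∀ (i : Fin n) (ab : Fin p × Fin r),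
      (∫ ω, (1 / 4 : ℝ) * ∑ c₁ : Bool, ∑ c₂ : Bool,
          rowKron (fun a => sgn c₁ * p₁ * u ω a + sgn c₂ * p₂ * hh a)
            ((sgn c₁ / p₁) • (H * A ω) + (sgn c₂ / p₂) • D) i ab ∂μ)
        = Gt i ab := by
  intro i ab
  have hGprev : Gprev = Matrix.of fun j b => ∫ ω, rowKron (u ω) (A ω) j b ∂μ :=
    Matrix.ext fun j b => (hprev j b).symm
  have hint : ∀ j b, Integrable (fun ω => rowKron (u ω) (A ω) j b) μ := hint_uA
  calc _ = ∫ ω, (H * rowKron (u ω) (A ω)) i ab + rowKron hh D i ab ∂μ := by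
        refine integral_congr_ae (Filter.Eventually.of_forall fun ω => ?_)
        dsimp only
        rw [sign_average_rowKron _ _ _ _ hp₁.ne' hp₂.ne', Matrix.add_apply, rowKron_mul_left]
    _ = (H * Gprev) i ab + rowKron hh D i ab := by
        rw [integral_add (integrable_matrix_mul_apply H hint i ab) (integrable_const _),
          integral_matrix_mul_apply H hint, integral_const, probReal_univ, one_smul, hGprev]
    _ = Gt i ab := by rw [hGt, Matrix.add_apply]

/-- Unbiasedness of the KF-RTRL recursion step: if `E[u_{t−1} ⊗ A_{t−1}] = G_{t−1}` and
`G_t = H_t G_{t−1} + ĥ_t ⊗ D_t`, then with `c₁, c₂` independent uniform signs independent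
of `(u_{t−1}, A_{t−1})` (expectation realized as the average over the four sign patterns
on the product space), `E[u_t ⊗ A_t] = G_t`, where
`u_t = c₁p₁u_{t−1} + c₂p₂ĥ_t` and `A_t = c₁(1/p₁)H_tA_{t−1} + c₂(1/p₂)D_t`. -/
theorem stmt16 {Ω : Type*} [MeasurableSpace Ω] (μ : Measure Ω) [IsProbabilityMeasure μ]
    {p n r : ℕ} (u : Ω → Fin p → ℝ) (A : Ω → Matrix (Fin n) (Fin r) ℝ)
    (Gprev Gt : Matrix (Fin n) (Fin p × Fin r) ℝ)
    (H : Matrix (Fin n) (Fin n) ℝ) (hh : Fin p → ℝ) (D : Matrix (Fin n) (Fin r) ℝ)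
    (p₁ p₂ : ℝ) (hp₁ : 0 < p₁) (hp₂ : 0 < p₂)
    (hint_u : ∀ a, Integrable (fun ω => u ω a) μ)
    (hint_A : ∀ i b, Integrable (fun ω => A ω i b) μ)
    (hint_uA : ∀ (i : Fin n) (ab : Fin p × Fin r), Integrable (fun ω => u ω ab.1 * A ω i ab.2) μ)
    (hint_uHA : ∀ (i : Fin n) (ab : Fin p × Fin r),
      Integrable (fun ω => u ω ab.1 * (H * A ω) i ab.2) μ)
    (hprev : ∀ (i : Fin n) (ab : Fin p × Fin r), (∫ ω, rowKron (u ω) (A ω) i ab ∂μ) = Gprev i ab)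
    (hGt : Gt = H * Gprev + rowKron hh D) :
    ∀ (i : Fin n) (ab : Fin p × Fin r),
      (∫ ω, (1 / 4 : ℝ) * ∑ c₁ : Bool, ∑ c₂ : Bool,
          rowKron (fun a => sgn c₁ * p₁ * u ω a + sgn c₂ * p₂ * hh a)
            ((sgn c₁ / p₁) • (H * A ω) + (sgn c₂ / p₂) • D) i ab ∂μ)
        = Gt i ab :=
  stmt16_general μ u A Gprev Gt H hh D p₁ p₂ hp₁ hp₂ hint_uA hprev hGt
end
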